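/- Let X = c₀ (the real Banach space of real sequences converging to 0, with the supremum norm). For every 1 ≤ p ≤ ∞, every L_p(c₀)-bounded sequence in L₀(c₀) that converges scalarly in measure to the null function has a subsequence converging scalarly a.e. to the null function. -/

import Mathlib

open MeasureTheory Filter Topology ENNReal Set

noncomputable section

/-- Lebesgue measure on `[0,1]`, as a measure on `ℝ`. -/
def μ01 : Measure ℝ := volume.restrict (Set.Icc 0 1)

section Defs
variable {X : Type*} [NormedAddCommGroup X] [NormedSpace ℝ X]

/-- `(f n)` converges to `g` scalarly in measure. -/
def ScalarInMeasure (f : ℕ → ℝ → X) (g : ℝ → X) : Prop :=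
  ∀ φ : X →L[ℝ] ℝ,
    TendstoInMeasure μ01 (fun n ω => φ (f n ω)) atTop (fun ω => φ (g ω))

/-- `(f n)` converges to `g` scalarly almost everywhere. -/
def ScalarAE (f : ℕ → ℝ → X) (g : ℝ → X) : Prop :=
  ∀ φ : X →L[ℝ] ℝ, ∀ᵐ ω ∂μ01,
    Tendsto (fun n => φ (f n ω)) atTop (𝓝 (φ (g ω)))

/-- `(f n)` converges to `g` weakly almost everywhere. -/
def WeaklyAE (f : ℕ → ℝ → X) (g : ℝ → X) : Prop :=
  ∃ A : Set ℝ, MeasurableSet A ∧ μ01 A = 1 ∧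
    ∀ ω ∈ A, ∀ φ : X →L[ℝ] ℝ,
      Tendsto (fun n => φ (f n ω)) atTop (𝓝 (φ (g ω)))

/-- `(f n)` converges to `g` scalarly in `L_p`. -/
def ScalarInLp (p : ℝ≥0∞) (f : ℕ → ℝ → X) (g : ℝ → X) : Prop :=
  ∀ φ : X →L[ℝ] ℝ,
    Tendsto (fun n => eLpNorm (fun ω => φ (f n ω) - φ (g ω)) p μ01) atTop (𝓝 0)

/-- `(f n)` is bounded in `L_p(X)`. -/
def LpBounded (p : ℝ≥0∞) (f : ℕ → ℝ → X) : Prop :=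
  ∃ C : ℝ≥0∞, C < ⊤ ∧ ∀ n, eLpNorm (f n) p μ01 ≤ C

/-- `(f n)` is pointwise bounded almost everywhere. -/
def PtwiseBddAE (f : ℕ → ℝ → X) : Prop :=
  ∀ᵐ ω ∂μ01, BddAbove (Set.range fun n => ‖f n ω‖)

/-- `(f n)` is scalarly Cauchy in measure. -/
def ScalarCauchyInMeasure (f : ℕ → ℝ → X) : Prop :=
  ∀ φ : X →L[ℝ] ℝ, ∀ ε : ℝ, 0 < ε → ∃ N : ℕ, ∀ n ≥ N, ∀ m ≥ N,
    μ01 {ω | ε ≤ |φ (f n ω) - φ (f m ω)|} < ENNReal.ofReal ε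

/-- The `q`-Pettis norm of a function (possibly infinite). -/
def pettisNorm (q : ℝ≥0∞) (f : ℝ → X) : ℝ≥0∞ :=
  ⨆ (φ : X →L[ℝ] ℝ) (_ : ‖φ‖ ≤ 1), eLpNorm (fun ω => φ (f ω)) q μ01

end Defs

/-- `X` is an Asplund space: every closed separable subspace has separable dual. -/
def AsplundCond (X : Type*) [NormedAddCommGroup X] [NormedSpace ℝ X] : Prop :=
  ∀ Y : Submodule ℝ X, IsClosed (Y : Set X) →
    TopologicalSpace.SeparableSpace Y →
    TopologicalSpace.SeparableSpace (StrongDual ℝ Y)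

/-!
A functional `φ` on `c₀` satisfies `∑ⱼ |φ eⱼ| ≤ ‖φ‖`. Choose indices `n₀ < n₁ < ⋯` and cut-offs
`J₀ ≤ J₁ ≤ ⋯` alternately, so that the head of `f nₖ` on the coordinates `≤ Jₖ` is small in
measure (finitely many coordinates tend to `0` in measure), and its tail beyond `Jₖ₊₁` is small in
`L¹` (dominated convergence). Both smallness conditions are summable in `k`, so heads and tails tend
to `0` a.e., for all `φ` at once. The middle blocks `(Jₖ, Jₖ₊₁]` are disjoint, whence
`∑ₖ ∫ |φ (middle block of f nₖ)| ≤ ‖φ‖ · supₙ ‖f n‖_{L¹}`, and the middle parts tend to `0` a.e. too.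
-/

open scoped ZeroAtInfty

abbrev c₀ := C₀(ℕ, ℝ)

namespace c₀

lemma tendsto_atTop_zero (x : c₀) : Tendsto x atTop (𝓝 0) := by
  simpa [cocompact_eq_cofinite, Nat.cofinite_eq_atTop] using x.zero_at_infty'

lemma abs_apply_le_norm (x : c₀) (j : ℕ) : |x j| ≤ ‖x‖ := by
  rw [← ZeroAtInftyContinuousMap.norm_toBCF_eq_norm, ← Real.norm_eq_abs]
  exact x.toBCF.norm_coe_le_norm j

lemma enorm_apply_le_enorm (x : c₀) (j : ℕ) : ‖x j‖ₑ ≤ ‖x‖ₑ := by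
  simpa only [enorm_le_iff_norm_le, Real.norm_eq_abs] using abs_apply_le_norm x j

lemma norm_le_of_forall_abs_apply_le (x : c₀) {C : ℝ} (hC : 0 ≤ C) (h : ∀ j, |x j| ≤ C) :
    ‖x‖ ≤ C := by
  rw [← ZeroAtInftyContinuousMap.norm_toBCF_eq_norm]
  exact (BoundedContinuousFunction.norm_le hC).mpr h

lemma abs_indicator_apply_le_norm (S : Set ℕ) (x : c₀) (j : ℕ) : |S.indicator x j| ≤ ‖x‖ := by
  by_cases hj : j ∈ S <;> simp [hj, abs_apply_le_norm]

def restrict (S : Set ℕ) : c₀ →L[ℝ] c₀ :=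
  LinearMap.mkContinuous
    { toFun x :=
        { toFun := S.indicator x
          continuous_toFun := continuous_of_discreteTopology
          zero_at_infty' := squeeze_zero_norm (fun _ => norm_indicator_le_norm_self _ _)
            (by simpa using x.zero_at_infty'.norm) }
      map_add' x y := by ext j; by_cases hj : j ∈ S <;> simp [hj]
      map_smul' c x := by ext j; by_cases hj : j ∈ S <;> simp [hj] }
    1 fun x => by
      simpa using norm_le_of_forall_abs_apply_le _ (norm_nonneg x) (abs_indicator_apply_le_norm S x)

lemma restrict_apply (S : Set ℕ) (x : c₀) (j : ℕ) : restrict S x j = S.indicator x j := rfl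

lemma norm_restrict_le (S : Set ℕ) (x : c₀) : ‖restrict S x‖ ≤ ‖x‖ :=
  norm_le_of_forall_abs_apply_le _ (norm_nonneg x) (abs_indicator_apply_le_norm S x)

def single (j : ℕ) : c₀ where
  toFun := Pi.single j 1
  continuous_toFun := continuous_of_discreteTopology
  zero_at_infty' := by
    rw [cocompact_eq_cofinite, Nat.cofinite_eq_atTop]
    refine tendsto_const_nhds.congr' ?_
    filter_upwards [eventually_gt_atTop j] with i hi
    simp [hi.ne']

lemma single_apply (j i : ℕ) : single j i = (Pi.single j 1 : ℕ → ℝ) i := rfl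

def eval (j : ℕ) : c₀ →L[ℝ] ℝ :=
  LinearMap.mkContinuous
    { toFun x := x j
      map_add' _ _ := rfl
      map_smul' _ _ := rfl }
    1 fun x => by simpa [Real.norm_eq_abs] using abs_apply_le_norm x j

lemma sum_apply {ι : Type*} (F : Finset ι) (x : ι → c₀) (i : ℕ) :
    (∑ j ∈ F, x j) i = ∑ j ∈ F, x j i :=
  map_sum (eval i) x F

lemma restrict_Ioc_eq_sum (a b : ℕ) (x : c₀) :
    restrict (Ioc a b) x = ∑ j ∈ Finset.Ioc a b, x j • single j := by
  ext i
  simp [restrict_apply, sum_apply, single_apply, Pi.single_apply, Set.indicator_apply]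

lemma restrict_Iic_add_restrict_Ioc_add_restrict_Ioi {a b : ℕ} (hab : a ≤ b) (x : c₀) :
    restrict (Iic a) x + restrict (Ioc a b) x + restrict (Ioi b) x = x := by
  ext j
  simp only [ZeroAtInftyContinuousMap.coe_add, Pi.add_apply, restrict_apply, indicator_apply,
    mem_Iic, mem_Ioc, mem_Ioi]
  split_ifs <;> first | omega | ring

lemma enorm_apply_restrict_Ioc_le (φ : c₀ →L[ℝ] ℝ) (a b : ℕ) (x : c₀) :
    ‖φ (restrict (Ioc a b) x)‖ₑ ≤ (∑ j ∈ Finset.Ioc a b, ‖φ (single j)‖ₑ) * ‖x‖ₑ := by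
  rw [restrict_Ioc_eq_sum, map_sum, Finset.sum_mul]
  refine (enorm_sum_le _ _).trans (Finset.sum_le_sum fun j _ => ?_)
  rw [map_smul, smul_eq_mul, enorm_mul, mul_comm]
  gcongr
  exact enorm_apply_le_enorm x j

lemma sum_abs_apply_single_le_norm (φ : c₀ →L[ℝ] ℝ) (F : Finset ℕ) :
    ∑ j ∈ F, |φ (single j)| ≤ ‖φ‖ := by
  set e : ℕ → ℝ := fun j => if 0 ≤ φ (single j) then 1 else -1
  have he : ∀ j, e j * φ (single j) = |φ (single j)| := fun j => by
    by_cases h : 0 ≤ φ (single j)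
    · simp [e, h, abs_of_nonneg h]
    · simp [e, h, abs_of_neg (not_le.mp h)]
  set u : c₀ := ∑ j ∈ F, e j • single j
  have hu : ‖u‖ ≤ 1 := by
    refine norm_le_of_forall_abs_apply_le u zero_le_one fun i => ?_
    simp only [u, sum_apply, ZeroAtInftyContinuousMap.coe_smul, Pi.smul_apply, single_apply,
      Pi.single_apply, smul_eq_mul, mul_ite, mul_one, mul_zero, Finset.sum_ite_eq]
    split_ifs
    · by_cases h : 0 ≤ φ (single i) <;> simp [e, h]
    · simp
  calc ∑ j ∈ F, |φ (single j)| = φ u := by simp [u, map_sum, he]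
    _ ≤ ‖φ‖ * ‖u‖ := (le_abs_self _).trans (φ.le_opNorm u)
    _ ≤ ‖φ‖ := mul_le_of_le_one_right (norm_nonneg φ) hu

lemma tsum_enorm_apply_single_le (φ : c₀ →L[ℝ] ℝ) : ∑' j, ‖φ (single j)‖ₑ ≤ ‖φ‖ₑ := by
  refine ENNReal.tsum_le_of_sum_range_le fun m => ?_
  calc ∑ j ∈ Finset.range m, ‖φ (single j)‖ₑ
      = ENNReal.ofReal (∑ j ∈ Finset.range m, |φ (single j)|) := by
        simp only [Real.enorm_eq_ofReal_abs]
        exact (ENNReal.ofReal_sum_of_nonneg fun _ _ => abs_nonneg _).symm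
    _ ≤ ENNReal.ofReal ‖φ‖ := ENNReal.ofReal_le_ofReal (sum_abs_apply_single_le_norm φ _)
    _ = ‖φ‖ₑ := ofReal_norm φ

lemma exists_le_abs_apply_of_le_norm_restrict_Iic {ε : ℝ} {J : ℕ} {x : c₀}
    (h : ε ≤ ‖restrict (Iic J) x‖) : ∃ j ≤ J, ε ≤ |x j| := by
  by_contra! hlt
  set M := (Finset.range (J + 1)).sup' Finset.nonempty_range_add_one fun j => |x j|
  have hle : ∀ j ≤ J, |x j| ≤ M := fun j hj =>
    Finset.le_sup' (fun j => |x j|) (Finset.mem_range_succ_iff.mpr hj)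
  have hM : M < ε := (Finset.sup'_lt_iff _).mpr fun j hj =>
    hlt j (Finset.mem_range_succ_iff.mp hj)
  have hM₀ : 0 ≤ M := (abs_nonneg _).trans (hle 0 J.zero_le)
  refine h.not_gt (lt_of_le_of_lt (norm_le_of_forall_abs_apply_le _ hM₀ fun j => ?_) hM)
  rw [restrict_apply, indicator_apply]
  split_ifs with hj
  · exact hle j hj
  · simpa using hM₀

lemma tendsto_restrict_Ioi (x : c₀) : Tendsto (fun J => restrict (Ioi J) x) atTop (𝓝 0) := by
  refine Metric.tendsto_atTop.mpr fun ε hε => ?_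
  obtain ⟨J₀, hJ₀⟩ := Metric.tendsto_atTop.mp (tendsto_atTop_zero x) (ε / 2) (half_pos hε)
  refine ⟨J₀, fun J hJ => ?_⟩
  rw [dist_zero_right]
  refine (norm_le_of_forall_abs_apply_le _ (half_pos hε).le fun j => ?_).trans_lt (half_lt_self hε)
  rw [restrict_apply, indicator_apply]
  split_ifs with hj
  · simpa using (hJ₀ j (hJ.trans (mem_Ioi.mp hj).le)).le
  · simpa using (half_pos hε).le

lemma tendsto_apply_of_tendsto_restrict {x : ℕ → c₀} {J : ℕ → ℕ} (hJ : Monotone J)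
    (φ : c₀ →L[ℝ] ℝ)
    (hhead : Tendsto (fun k => restrict (Iic (J k)) (x k)) atTop (𝓝 0))
    (htail : Tendsto (fun k => restrict (Ioi (J (k + 1))) (x k)) atTop (𝓝 0))
    (hmid : Tendsto (fun k => φ (restrict (Ioc (J k) (J (k + 1))) (x k))) atTop (𝓝 0)) :
    Tendsto (fun k => φ (x k)) atTop (𝓝 0) := by
  have hφ := φ.continuous.tendsto' 0 0 (map_zero φ)
  have h := ((hφ.comp hhead).add hmid).add (hφ.comp htail)
  simp only [add_zero] at h
  refine h.congr fun k => ?_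
  simp only [Function.comp_apply, ← map_add,
    restrict_Iic_add_restrict_Ioc_add_restrict_Ioi (hJ k.le_succ)]

end c₀

lemma exists_strictMono_monotone_interleaved {P Q : ℕ → ℕ → ℕ → Prop}
    (hP : ∀ J k, ∀ᶠ n in atTop, P J n k) (hQ : ∀ n k, ∀ᶠ J in atTop, Q n J k) :
    ∃ n J : ℕ → ℕ, StrictMono n ∧ Monotone J ∧ ∀ k, P (J k) (n k) k ∧ Q (n k) (J (k + 1)) k := by
  choose a ha using fun J N k => ((hP J k).and (eventually_gt_atTop N)).exists
  choose b hb using fun n J k => ((hQ n k).and (eventually_ge_atTop J)).exists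
  -- `s k = (J k, n k)`
  let s : ℕ → ℕ × ℕ := fun k => Nat.rec (0, a 0 0 0)
    (fun k Jn => (b Jn.2 Jn.1 k, a (b Jn.2 Jn.1 k) Jn.2 (k + 1))) k
  refine ⟨fun k => (s k).2, fun k => (s k).1, strictMono_nat_of_lt_succ fun k => (ha _ _ _).2,
    monotone_nat_of_le_succ fun k => (hb _ _ _).2, fun k => ⟨?_, (hb _ _ _).1⟩⟩
  cases k
  · exact (ha 0 0 0).1
  · exact (ha _ _ _).1

section Measure

variable {Ω : Type*} [MeasurableSpace Ω] {μ : Measure Ω}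

lemma ae_tendsto_zero_of_tsum_measure_ne_top {E : Type*} [NormedAddCommGroup E]
    {g : ℕ → Ω → E} {ε : ℕ → ℝ} (hε : Tendsto ε atTop (𝓝 0))
    (h : ∑' k, μ {ω | ε k ≤ ‖g k ω‖} ≠ ∞) :
    ∀ᵐ ω ∂μ, Tendsto (g · ω) atTop (𝓝 0) := by
  filter_upwards [ae_eventually_notMem h] with ω hω
  refine squeeze_zero_norm' ?_ hε
  filter_upwards [hω] with k hk
  exact (not_le.mp hk).le

lemma ae_tendsto_zero_of_tsum_lintegral_ne_top {E : Type*} [NormedAddCommGroup E]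
    {g : ℕ → Ω → E} (hg : ∀ k, AEStronglyMeasurable (g k) μ)
    (h : ∑' k, ∫⁻ ω, ‖g k ω‖ₑ ∂μ ≠ ∞) :
    ∀ᵐ ω ∂μ, Tendsto (g · ω) atTop (𝓝 0) := by
  have hmeas k := (hg k).enorm
  rw [← lintegral_tsum hmeas] at h
  filter_upwards [ae_lt_top' (AEMeasurable.tsum hmeas) h] with ω hω
  exact tendsto_zero_iff_enorm_tendsto_zero.mpr (ENNReal.tendsto_atTop_zero_of_tsum_ne_top hω.ne)

namespace c₀

lemma tendstoInMeasure_restrict_Iic {f : ℕ → Ω → c₀}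
    (hf : ∀ j, TendstoInMeasure μ (fun n ω => f n ω j) atTop 0) (J : ℕ) :
    TendstoInMeasure μ (fun n ω => restrict (Iic J) (f n ω)) atTop 0 := by
  simp only [tendstoInMeasure_iff_norm, Pi.zero_apply, sub_zero] at hf ⊢
  intro ε hε
  have hsub : ∀ n, {ω | ε ≤ ‖restrict (Iic J) (f n ω)‖}
      ⊆ ⋃ j ∈ Finset.range (J + 1), {ω | ε ≤ ‖f n ω j‖} := fun n ω hω => by
    obtain ⟨j, hj, hεj⟩ := exists_le_abs_apply_of_le_norm_restrict_Iic hω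
    exact mem_biUnion (Finset.mem_range_succ_iff.mpr hj) hεj
  refine tendsto_of_tendsto_of_tendsto_of_le_of_le tendsto_const_nhds ?_ (fun _ => zero_le)
    fun n => (measure_mono (hsub n)).trans (measure_biUnion_finset_le _ _)
  simpa using tendsto_finsetSum (Finset.range (J + 1)) fun j _ => hf j ε hε

lemma tendsto_lintegral_enorm_restrict_Ioi {g : Ω → c₀} (hg : AEStronglyMeasurable g μ)
    (hint : ∫⁻ ω, ‖g ω‖ₑ ∂μ ≠ ∞) :
    Tendsto (fun J => ∫⁻ ω, ‖restrict (Ioi J) (g ω)‖ₑ ∂μ) atTop (𝓝 0) := by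
  simpa using tendsto_lintegral_of_dominated_convergence' _
    (fun J => ((restrict (Ioi J)).continuous.comp_aestronglyMeasurable hg).enorm)
    (fun J => ae_of_all _ fun ω => enorm_le_iff_norm_le.mpr (norm_restrict_le _ _)) hint
    (ae_of_all _ fun ω => tendsto_zero_iff_enorm_tendsto_zero.mp (tendsto_restrict_Ioi (g ω)))

lemma tsum_sum_Ioc_le_tsum {J : ℕ → ℕ} (hJ : Monotone J) (a : ℕ → ℝ≥0∞) :
    ∑' k, ∑ j ∈ Finset.Ioc (J k) (J (k + 1)), a j ≤ ∑' j, a j := by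
  refine ENNReal.tsum_le_of_sum_range_le fun m => ?_
  have htelescope : ∑ k ∈ Finset.range m, ∑ j ∈ Finset.Ioc (J k) (J (k + 1)), a j
      = ∑ j ∈ Finset.Ioc (J 0) (J m), a j := by
    induction m with
    | zero => simp
    | succ m ih =>
      rw [Finset.sum_range_succ, ih, Finset.sum_Ioc_consecutive _ (hJ m.zero_le) (hJ m.le_succ)]
  exact htelescope ▸ ENNReal.sum_le_tsum _

lemma tsum_lintegral_enorm_apply_restrict_Ioc_le (φ : c₀ →L[ℝ] ℝ) {J : ℕ → ℕ}
    (hJ : Monotone J) {g : ℕ → Ω → c₀} {C : ℝ≥0∞} (hC : ∀ k, ∫⁻ ω, ‖g k ω‖ₑ ∂μ ≤ C) :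
    ∑' k, ∫⁻ ω, ‖φ (restrict (Ioc (J k) (J (k + 1))) (g k ω))‖ₑ ∂μ ≤ ‖φ‖ₑ * C :=
  calc ∑' k, ∫⁻ ω, ‖φ (restrict (Ioc (J k) (J (k + 1))) (g k ω))‖ₑ ∂μ
      ≤ ∑' k, (∑ j ∈ Finset.Ioc (J k) (J (k + 1)), ‖φ (single j)‖ₑ) * C := by
        refine ENNReal.tsum_le_tsum fun k => ?_
        refine (lintegral_mono fun ω => enorm_apply_restrict_Ioc_le φ _ _ (g k ω)).trans ?_
        rw [lintegral_const_mul' _ _ (ENNReal.sum_ne_top.mpr fun _ _ => enorm_ne_top)]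
        gcongr
        exact hC k
    _ ≤ ‖φ‖ₑ * C := by
        rw [ENNReal.tsum_mul_right]
        gcongr
        exact (tsum_sum_Ioc_le_tsum hJ _).trans (tsum_enorm_apply_single_le φ)

end c₀

end Measure

instance : IsProbabilityMeasure μ01 :=
  ⟨by simp [μ01]⟩

lemma LpBounded.exists_lintegral_enorm_le {X : Type*} [NormedAddCommGroup X]
    {p : ℝ≥0∞} {f : ℕ → ℝ → X} (h : LpBounded p f) (hp : 1 ≤ p)
    (hf : ∀ n, AEStronglyMeasurable (f n) μ01) :
    ∃ C < ∞, ∀ n, ∫⁻ ω, ‖f n ω‖ₑ ∂μ01 ≤ C := by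
  obtain ⟨C, hC, hfC⟩ := h
  refine ⟨C, hC, fun n => ?_⟩
  rw [← eLpNorm_one_eq_lintegral_enorm]
  exact (eLpNorm_le_eLpNorm_of_exponent_le hp (hf n)).trans (hfC n)

theorem stmt_13 :
    ∀ p : ℝ≥0∞, 1 ≤ p →
      ∀ f : ℕ → ℝ → ZeroAtInftyContinuousMap ℕ ℝ,
        (∀ n, AEStronglyMeasurable (f n) μ01) → LpBounded p f →
        ScalarInMeasure f 0 →
        ∃ φ : ℕ → ℕ, StrictMono φ ∧ ScalarAE (fun k => f (φ k)) 0 := by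
  intro p hp f hf hbdd hsc
  obtain ⟨C, hC, hfC⟩ := hbdd.exists_lintegral_enorm_le hp hf
  have hcoord j : TendstoInMeasure μ01 (fun n ω => f n ω j) atTop 0 := hsc (c₀.eval j)
  have hpow (k : ℕ) : (0 : ℝ≥0∞) < 2⁻¹ ^ k := ENNReal.pow_pos (by simp) k
  obtain ⟨n, J, hn, hJ, hsmall⟩ := exists_strictMono_monotone_interleaved
    (P := fun J n k => μ01 {ω | (2⁻¹ : ℝ) ^ k ≤ ‖c₀.restrict (Iic J) (f n ω)‖} ≤ 2⁻¹ ^ k)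
    (Q := fun n J k => ∫⁻ ω, ‖c₀.restrict (Ioi J) (f n ω)‖ₑ ∂μ01 ≤ 2⁻¹ ^ k)
    (fun J k => by
      simpa using (tendstoInMeasure_iff_norm.mp (c₀.tendstoInMeasure_restrict_Iic hcoord J)
        _ (by positivity)).eventually_le_const (hpow k))
    (fun n k => (c₀.tendsto_lintegral_enorm_restrict_Ioi (hf n)
      ((hfC n).trans_lt hC).ne).eventually_le_const (hpow k))
  refine ⟨n, hn, fun φ => ?_⟩
  have hhead := ae_tendsto_zero_of_tsum_measure_ne_top
    (tendsto_pow_atTop_nhds_zero_of_lt_one (by norm_num) (by norm_num : (2⁻¹ : ℝ) < 1))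
    (ne_top_of_le_ne_top (by simp) (ENNReal.tsum_le_tsum fun k => (hsmall k).1))
  have htail := ae_tendsto_zero_of_tsum_lintegral_ne_top
    (fun k => (c₀.restrict _).continuous.comp_aestronglyMeasurable (hf (n k)))
    (ne_top_of_le_ne_top (by simp) (ENNReal.tsum_le_tsum fun k => (hsmall k).2))
  have hmid := ae_tendsto_zero_of_tsum_lintegral_ne_top
    (fun k => (φ.comp (c₀.restrict _)).continuous.comp_aestronglyMeasurable (hf (n k)))
    (ne_top_of_le_ne_top (ENNReal.mul_ne_top enorm_ne_top hC.ne)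
      (c₀.tsum_lintegral_enorm_apply_restrict_Ioc_le φ hJ fun k => hfC (n k)))
  filter_upwards [hhead, htail, hmid] with ω h1 h2 h3
  simpa using c₀.tendsto_apply_of_tendsto_restrict hJ φ h1 h2 h3
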